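/- An ortholattice in which commensurability implies commutativity, i.e., such that for all a, b, whenever (a∩b)∪(a∩b')∪(a'∩b)∪(a'∩b') = 1 holds, then a = (a∩b)∪(a∩b'), is orthomodular. -/
import Mathlib


/-- An ortholattice as an algebra ⟨α, ', ∪, ∩⟩ with join `j` and
orthocomplement `c` primitive, and meet defined by De Morgan. -/
structure OrthoLattice (α : Type*) where
  j : α → α → α
  c : α → α
  j_comm : ∀ a b, j a b = j b a
  j_assoc : ∀ a b d, j (j a b) d = j a (j b d)
  c_invol : ∀ a, c (c a) = a
  j_top : ∀ a b, j a (j b (c b)) = j b (c b)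
  absorb : ∀ a b, j a (c (j (c a) (c b))) = a

namespace OrthoLattice

variable {α : Type*}

/-- meet: a ∩ b = (a' ∪ b')' -/
def m (L : OrthoLattice α) (a b : α) : α := L.c (L.j (L.c a) (L.c b))

/-- the unit 1 = a ∪ a' -/
def one (L : OrthoLattice α) (a : α) : α := L.j a (L.c a)

/-- quantum equivalence a ≡ b = (a∩b) ∪ (a'∩b') -/
def equiv (L : OrthoLattice α) (a b : α) : α := L.j (L.m a b) (L.m (L.c a) (L.c b))

/-- classical equivalence a ≡₀ b = (a'∪b) ∩ (a∪b') -/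
def equiv0 (L : OrthoLattice α) (a b : α) : α := L.m (L.j (L.c a) b) (L.j a (L.c b))

/-- Sasaki hook a →₁ b = a' ∪ (a ∩ b) -/
def sasaki (L : OrthoLattice α) (a b : α) : α := L.j (L.c a) (L.m a b)

section Aux
variable (L : OrthoLattice α)

def le (a b : α) : Prop := L.j a b = b


lemma meet_absorb (a b : α) : L.j (L.c a) (L.c (L.j a b)) = L.c a := by
  have := L.absorb (L.c a) (L.c b)
  rwa [L.c_invol, L.c_invol] at this

lemma j_idem (a : α) : L.j a a = a := by
  have h1 := L.absorb a (L.j a a)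
  rwa [L.meet_absorb a a, L.c_invol] at h1

lemma le_refl (a : α) : L.le a a := L.j_idem a

lemma le_trans {a b d : α} (h1 : L.le a b) (h2 : L.le b d) : L.le a d := by
  unfold le at *; rw [← h2, ← L.j_assoc, h1]

lemma le_antisymm {a b : α} (h1 : L.le a b) (h2 : L.le b a) : a = b := by
  unfold le at *; rw [← h1, L.j_comm, h2]

lemma le_j_left (a b : α) : L.le a (L.j a b) := by
  unfold le; rw [← L.j_assoc, L.j_idem]

lemma le_j_right (a b : α) : L.le b (L.j a b) := by
  rw [L.j_comm]; exact L.le_j_left b a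

lemma j_le {a b x : α} (h1 : L.le a x) (h2 : L.le b x) : L.le (L.j a b) x := by
  unfold le at *; rw [L.j_assoc, h2, h1]

lemma c_le_c {a b : α} (h1 : L.le a b) : L.le (L.c b) (L.c a) := by
  unfold le at *
  have h2 := L.absorb (L.c a) (L.c b)
  rw [L.c_invol, L.c_invol, h1] at h2
  rw [L.j_comm]; exact h2

lemma le_of_c_le_c {a b : α} (h1 : L.le (L.c b) (L.c a)) : L.le a b := by
  have := L.c_le_c h1
  rwa [L.c_invol, L.c_invol] at this

lemma le_one (a b : α) : L.le a (L.one b) := L.j_top a b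

lemma one_eq (a b : α) : L.one a = L.one b :=
  L.le_antisymm (L.le_one _ b) (L.le_one _ a)

lemma j_zero (x y : α) : L.j x (L.c (L.one y)) = x := by
  have h1 := L.absorb x (L.c x)
  rw [L.c_invol] at h1
  have : L.j (L.c x) x = L.one x := L.j_comm _ _
  rw [this, L.one_eq x y] at h1
  exact h1

lemma zero_le (x y : α) : L.le (L.c (L.one y)) x := by
  unfold le; rw [L.j_comm]; exact L.j_zero x y

lemma m_le_left (a b : α) : L.le (L.m a b) a := by
  have h1 : L.le (L.c a) (L.j (L.c a) (L.c b)) := L.le_j_left _ _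
  have h2 := L.c_le_c h1
  rwa [L.c_invol] at h2

lemma m_le_right (a b : α) : L.le (L.m a b) b := by
  have h1 : L.le (L.c b) (L.j (L.c a) (L.c b)) := L.le_j_right _ _
  have h2 := L.c_le_c h1
  rwa [L.c_invol] at h2

lemma le_m {x a b : α} (h1 : L.le x a) (h2 : L.le x b) : L.le x (L.m a b) := by
  apply L.le_of_c_le_c
  rw [show L.c (L.m a b) = L.j (L.c a) (L.c b) from L.c_invol _]
  exact L.j_le (L.c_le_c h1) (L.c_le_c h2)

lemma m_comm (a b : α) : L.m a b = L.m b a := by unfold m; rw [L.j_comm]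

lemma m_eq_left {a b : α} (h1 : L.le a b) : L.m a b = a := by
  unfold m
  have h2 : L.j (L.c a) (L.c b) = L.c a := by
    rw [L.j_comm]; exact L.c_le_c h1
  rw [h2, L.c_invol]

lemma m_self_c (a : α) : L.m a (L.c a) = L.c (L.one a) := by
  unfold m one; rw [L.c_invol, L.j_comm]

lemma eq_zero {x y : α} (h1 : L.le x (L.c (L.one y))) : x = L.c (L.one y) :=
  L.le_antisymm h1 (L.zero_le x y)

end Aux
end OrthoLattice

/-- an ortholattice in which commensurability
((a∩b)∪(a∩b')∪(a'∩b)∪(a'∩b') = 1) implies commutativity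
(a = (a∩b)∪(a∩b')) is orthomodular. -/
theorem stmt17 {α : Type*} (L : OrthoLattice α)
    (h : ∀ a b : α,
      L.j (L.j (L.j (L.m a b) (L.m a (L.c b))) (L.m (L.c a) b))
        (L.m (L.c a) (L.c b)) = L.one a →
      a = L.j (L.m a b) (L.m a (L.c b))) :
    ∀ a b : α, L.j a (L.m (L.c a) (L.j a b)) = L.j a b := by
  intro a b
  set t := L.j a b with ht
  have hat : L.le a t := L.le_j_left a b
  -- simplify the pieces of the commensurability term for (t, a)
  have h1 : L.m t a = a := by rw [L.m_comm]; exact L.m_eq_left hat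
  have h2 : L.m (L.c t) a = L.c (L.one t) := by
    apply L.eq_zero
    have step : L.le (L.m (L.c t) a) (L.m a (L.c a)) :=
      L.le_m (L.m_le_right _ _) (L.le_trans (L.m_le_left _ _) (L.c_le_c hat))
    refine L.le_trans step ?_
    rw [L.m_self_c a, L.one_eq a t]
    exact L.le_refl _
  have h3 : L.m (L.c t) (L.c a) = L.c t := L.m_eq_left (L.c_le_c hat)
  -- the commensurability term T
  set T := L.j (L.j a (L.m t (L.c a))) (L.c t) with hT
  -- show T = 1
  set w := L.m t (L.j a (L.c t)) with hw
  have hcw : L.c w = L.j (L.c t) (L.m (L.c a) t) := by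
    show L.c (L.m t (L.j a (L.c t))) = _
    unfold OrthoLattice.m
    rw [L.c_invol, L.c_invol]
  have haT : L.le a T := L.le_trans (L.le_j_left a _) (L.le_j_left _ _)
  have hmT : L.le (L.m t (L.c a)) T := L.le_trans (L.le_j_right a _) (L.le_j_left _ _)
  have hctT : L.le (L.c t) T := L.le_j_right _ _
  have hcTt : L.le (L.c T) t := by
    have := L.c_le_c hctT; rwa [L.c_invol] at this
  have hcTca : L.le (L.c T) (L.c a) := L.c_le_c haT
  have hcTe : L.le (L.c T) (L.m (L.c a) t) := L.le_m hcTca hcTt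
  have hcTcw : L.le (L.c T) (L.c w) := by
    rw [hcw]; exact L.le_trans hcTe (L.le_j_right _ _)
  have hcTw : L.le (L.c T) w := by
    apply L.le_m hcTt
    -- c T ≤ j a (c t), since c (j a (c t)) = m (c a) t ≤ T
    have hce : L.c (L.j a (L.c t)) = L.m (L.c a) t := by
      unfold OrthoLattice.m; rw [L.c_invol]
    have heT : L.le (L.m (L.c a) t) T := by rw [L.m_comm]; exact hmT
    have := L.c_le_c heT
    rw [← hce, L.c_invol] at this
    exact this
  have hcT0 : L.c T = L.c (L.one t) := by
    apply L.eq_zero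
    refine L.le_trans (L.le_m hcTw hcTcw) ?_
    rw [L.m_self_c w, L.one_eq w t]
    exact L.le_refl _
  have hT1 : T = L.one t := by
    have := congrArg L.c hcT0
    rwa [L.c_invol, L.c_invol] at this
  -- apply the hypothesis to (t, a)
  have hpre : L.j (L.j (L.j (L.m t a) (L.m t (L.c a))) (L.m (L.c t) a))
      (L.m (L.c t) (L.c a)) = L.one t := by
    rw [h1, h2, h3, L.j_zero]; exact hT1
  have hconc := h t a hpre
  rw [h1] at hconc
  rw [L.m_comm (L.c a) t]
  -- goal : L.j a (L.m t (L.c a)) = t  ... note goal has (L.j a b) which is t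
  exact hconc.symm
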